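/- Let S and P be linear subspaces of a finite-dimensional real inner product space E and let u ∈ P with ‖u‖ = 1 and π_S u ≠ 0. Then |‖π_{S^⊥} u‖² − ‖π_{P^⊥}(π_S u)‖²/‖π_S u‖²| ≤ 8‖π_S − π_P‖⁴, where ‖π_S − π_P‖ denotes the operator norm. -/

import Mathlib

/-!
Write `a = ‖π_{S^⊥} u‖`, `s = ‖π_S u‖`, `b = ‖π_{P^⊥} π_S u‖`, `p = ‖π_P π_{S^⊥} u‖` and
`ε = ‖π_S − π_P‖`. On `P`, on `S` and on `S^⊥` respectively, `π_{S^⊥}`, `π_{P^⊥}` and `π_P`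
agree with `±(π_S − π_P)`, so `a ≤ ε`, `b ≤ ε s` and `p ≤ ε a`. Pythagoras gives `s² + a² = 1`
and, since `π_{P^⊥} π_S u = −π_{P^⊥} π_{S^⊥} u` for `u ∈ P`, also `b² + p² = a²`.
Hence `a² − b²/s² = (p² − a⁴)/s²`, which is at most `2ε⁴` in absolute value when `s² ≥ 1/2`;
otherwise `ε² ≥ a² > 1/2` and both `a²` and `b²/s²` lie in `[0, ε²] ⊆ [0, 2ε⁴]`.
-/

/-- The orthogonal projection of `E` onto the subspace `V`, as a map `E → E`. -/
noncomputable def proj {E : Type*} [NormedAddCommGroup E] [InnerProductSpace ℝ E]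
    (V : Submodule ℝ E) [V.HasOrthogonalProjection] : E →L[ℝ] E :=
  V.subtypeL.comp V.orthogonalProjectionOnto

open Submodule

theorem abs_sub_div_le_two_mul_sq {A B Q σ δ : ℝ} (hσ : 0 < σ) (hB : 0 ≤ B) (hQ : 0 ≤ Q)
    (hσA : σ + A = 1) (hBQ : B + Q = A) (hAδ : A ≤ δ) (hBδ : B ≤ δ * σ) (hQδ : Q ≤ δ * A) :
    |A - B / σ| ≤ 2 * δ ^ 2 := by
  have hA : 0 ≤ A := by linarith
  have hBσ : B / σ ≤ δ := (div_le_iff₀ hσ).mpr hBδ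
  rcases le_or_gt (1 / 2) σ with hσ_large | hσ_small
  · have hidentity : A - B / σ = (Q - A ^ 2) / σ := by
      field_simp
      linear_combination A * hσA - hBQ
    have hnum : |Q - A ^ 2| ≤ δ ^ 2 := by
      rw [abs_le]
      constructor <;> nlinarith
    rw [hidentity, abs_div, abs_of_pos hσ, div_le_iff₀ hσ]
    nlinarith [abs_nonneg (Q - A ^ 2)]
  · have hδ : δ ≤ 2 * δ ^ 2 := by nlinarith
    rw [abs_le]
    constructor <;> linarith [div_nonneg hB hσ.le]

section Projection

variable {E : Type*} [NormedAddCommGroup E] [InnerProductSpace ℝ E]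
  {V W : Submodule ℝ E} [V.HasOrthogonalProjection] [W.HasOrthogonalProjection]

theorem proj_eq_starProjection (V : Submodule ℝ E) [V.HasOrthogonalProjection] :
    proj V = V.starProjection :=
  rfl

theorem proj_orthogonal_apply (x : E) : proj Vᗮ x = x - proj V x :=
  starProjection_orthogonal_val x

theorem norm_sq_eq_add_norm_sq_proj (V : Submodule ℝ E) [V.HasOrthogonalProjection] (x : E) :
    ‖x‖ ^ 2 = ‖proj V x‖ ^ 2 + ‖proj Vᗮ x‖ ^ 2 :=
  norm_sq_eq_add_norm_sq_starProjection x V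

theorem norm_proj_orthogonal_le_of_mem {v : E} (hv : v ∈ W) :
    ‖proj Vᗮ v‖ ≤ ‖proj W - proj V‖ * ‖v‖ := by
  have hv_eq : proj Vᗮ v = (proj W - proj V) v := by
    rw [proj_orthogonal_apply, sub_apply, proj_eq_starProjection W,
      starProjection_eq_self_iff.mpr hv]
  exact hv_eq ▸ (proj W - proj V).le_opNorm v

theorem norm_proj_le_of_mem_orthogonal {w : E} (hw : w ∈ Wᗮ) :
    ‖proj V w‖ ≤ ‖proj W - proj V‖ * ‖w‖ := by
  have hw_eq : proj V w = -((proj W - proj V) w) := by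
    rw [sub_apply, proj_eq_starProjection W,
      (starProjection_apply_eq_zero_iff W).mpr hw, zero_sub, neg_neg]
  rw [hw_eq, norm_neg]
  exact (proj W - proj V).le_opNorm w

theorem norm_proj_orthogonal_proj_eq_of_mem {u : E} (hu : u ∈ W) :
    ‖proj Wᗮ (proj V u)‖ = ‖proj Wᗮ (proj Vᗮ u)‖ := by
  rw [proj_orthogonal_apply (V := V), map_sub, proj_eq_starProjection Wᗮ,
    starProjection_orthogonal_apply_eq_zero hu, zero_sub, norm_neg]

end Projection

/-- If `S` and `P` are linear subspaces of a finite-dimensional real inner product space `E`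
and `u ∈ P` is a unit vector with `π_S u ≠ 0`, then
`|‖π_{S^⊥} u‖² − ‖π_{P^⊥}(π_S u)‖²/‖π_S u‖²| ≤ 8‖π_S − π_P‖⁴` (operator norm). -/
theorem stmt6 {E : Type*} [NormedAddCommGroup E] [InnerProductSpace ℝ E]
    [FiniteDimensional ℝ E] (S P : Submodule ℝ E) (u : E) (hu : u ∈ P)
    (hu1 : ‖u‖ = 1) (hSu : proj S u ≠ 0) :
    |‖proj Sᗮ u‖ ^ 2 - ‖proj Pᗮ (proj S u)‖ ^ 2 / ‖proj S u‖ ^ 2| ≤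
      8 * ‖proj S - proj P‖ ^ 4 := by
  set ε := ‖proj S - proj P‖
  have ha : ‖proj Sᗮ u‖ ≤ ε := by
    simpa [hu1, norm_sub_rev] using norm_proj_orthogonal_le_of_mem (V := S) hu
  have hb : ‖proj Pᗮ (proj S u)‖ ≤ ε * ‖proj S u‖ :=
    norm_proj_orthogonal_le_of_mem (S.starProjection_apply_mem u)
  have hp : ‖proj P (proj Sᗮ u)‖ ≤ ε * ‖proj Sᗮ u‖ :=
    norm_proj_le_of_mem_orthogonal (Sᗮ.starProjection_apply_mem u)
  have hsa : ‖proj S u‖ ^ 2 + ‖proj Sᗮ u‖ ^ 2 = 1 := by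
    rw [← norm_sq_eq_add_norm_sq_proj, hu1, one_pow]
  have hbp : ‖proj Pᗮ (proj S u)‖ ^ 2 + ‖proj P (proj Sᗮ u)‖ ^ 2 = ‖proj Sᗮ u‖ ^ 2 := by
    rw [norm_proj_orthogonal_proj_eq_of_mem hu, add_comm, ← norm_sq_eq_add_norm_sq_proj]
  have hbound := abs_sub_div_le_two_mul_sq (δ := ε ^ 2) (pow_pos (norm_pos_iff.mpr hSu) 2)
    (by positivity) (by positivity) hsa hbp (by gcongr) (by rw [← mul_pow]; gcongr) (by rw [← mul_pow]; gcongr)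
  nlinarith [pow_nonneg (norm_nonneg (proj S - proj P)) 4]
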